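/- arXiv:1306.2088 — 3 statements merged into one kernel-verified Lean document; each statement's English description precedes it below -/
import Mathlib

section
/- Let q be a prime power, let 1 ≤ t ≤ k ≤ n, and let V₁, V₂ be two distinct t-dimensional subspaces of F_q^n with dim(V₁ ∩ V₂) = l for some l ∈ {0, 1, …, t−1}. Then for every j ∈ {l, l+1, …, t}, the number of k-dimensional subspaces U of F_q^n such that V₁ ⊆ U and dim(U ∩ V₂) = j equals q^{(k−t−j+l)(t−j)} · [t−l choose j−l]_q · [n−2t+l choose k−t−j+l]_q. -/
/-!
Subspaces `U ⊇ V₁` of `F_q^n` correspond to subspaces `Y` of the quotient `F_q^n ⧸ V₁`, with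
`dim Y = dim U - t` and `dim (U ∩ V₂) = dim (Y ∩ B) + l`, where `B`, the image of `V₂`, has
dimension `t - l`. So it suffices to count the `m`-dimensional subspaces `X` of an
`N`-dimensional space that meet a fixed `b`-dimensional `B` in dimension `s`. Sort them by
`S = X ∩ B`, one of `[b choose s]_q` subspaces. Modulo `S`, the `X` with `X ∩ B = S` become the
`(m - s)`-dimensional subspaces meeting `B ⧸ S` trivially, and there are `q^{cd} [N - c choose d]_q`
subspaces of dimension `d` meeting a `c`-dimensional subspace trivially. Both this and
`[N choose d]_q = |{independent d-tuples}| / |GL_d(F_q)|` come from counting spanning tuples.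
-/

open Module

/-- The Gaussian (q-)binomial coefficient `[a choose b]_q` with integer arguments,
defined (in `ℚ`) by the product formula `∏_{i=0}^{b-1} (q^{a-i} − 1)/(q^{b-i} − 1)`
when `0 ≤ b ≤ a`, and by convention `0` if `b < 0` or `b > a`. -/
def gaussBinomZ (q : ℕ) (a b : ℤ) : ℚ :=
  if 0 ≤ b ∧ b ≤ a then
    ∏ i ∈ Finset.range b.toNat, (((q : ℚ) ^ (a - i) - 1) / ((q : ℚ) ^ (b - i) - 1))
  else 0

theorem gaussBinomZ_eq_prod_div {q : ℕ} (hq : q ≠ 0) {a b : ℕ} (hba : b ≤ a) :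
    gaussBinomZ q a b =
      (∏ i ∈ Finset.range b, ((q : ℚ) ^ a - q ^ i)) /
        ∏ i ∈ Finset.range b, ((q : ℚ) ^ b - q ^ i) := by
  rw [gaussBinomZ, if_pos ⟨b.cast_nonneg, Int.ofNat_le.2 hba⟩, Int.toNat_natCast,
    ← Finset.prod_div_distrib]
  refine Finset.prod_congr rfl fun i _ => ?_
  have hqi : (q : ℚ) ^ i ≠ 0 := pow_ne_zero i (Nat.cast_ne_zero.2 hq)
  rw [zpow_sub₀ (Nat.cast_ne_zero.2 hq), zpow_sub₀ (Nat.cast_ne_zero.2 hq)]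
  simp only [zpow_natCast]
  rw [← mul_div_mul_left _ _ hqi]
  congr 1 <;> field_simp

theorem Nat.card_subtype_eq_mul_of_card_fiber {α β : Type*} [Finite α] [Finite β] (f : α → β)
    {p : α → Prop} {r : β → Prop} (hf : ∀ a, p a → r (f a)) {c : ℕ}
    (hc : ∀ b, r b → Nat.card {a // p a ∧ f a = b} = c) :
    Nat.card {a // p a} = Nat.card {b // r b} * c := by
  have := Fintype.ofFinite {b // r b}
  let e : {a // p a} ≃ Σ b : {b // r b}, {a // p a ∧ f a = b} :=
    { toFun a := ⟨⟨f a, hf a a.2⟩, a, a.2, rfl⟩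
      invFun x := ⟨x.2, x.2.2.1⟩
      left_inv _ := rfl
      right_inv x := Sigma.subtype_ext (Subtype.ext x.2.2.2) rfl }
  rw [Nat.card_congr e, Nat.card_sigma, Finset.sum_congr rfl fun b _ => hc b.1 b.2,
    Finset.sum_const, Finset.card_univ, smul_eq_mul, Nat.card_eq_fintype_card]

section Ring

variable {R M M' : Type*} [Ring R] [AddCommGroup M] [Module R M] [AddCommGroup M'] [Module R M']

theorem Submodule.card_mkQ_fiber (C : Submodule R M) (y : M ⧸ C) :
    Nat.card {x : M // C.mkQ x = y} = Nat.card C := by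
  obtain ⟨x₀, rfl⟩ := C.mkQ_surjective y
  exact Nat.card_congr
    { toFun x := ⟨x - x₀, (Submodule.Quotient.eq C).1 x.2⟩
      invFun c := ⟨c + x₀, by simp⟩
      left_inv x := by ext; simp
      right_inv c := by ext; simp }

theorem Submodule.card_ge_and_eq_card_quotient (S : Submodule R M) (P : Submodule R M → Prop) :
    Nat.card {X : Submodule R M // S ≤ X ∧ P X} =
      Nat.card {Y : Submodule R (M ⧸ S) // P (Y.comap S.mkQ)} :=
  Nat.card_congr ((S.comapMkQRelIso.toEquiv.subtypeEquiv fun _ => Iff.rfl).trans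
    (Equiv.subtypeSubtypeEquivSubtypeInter (· ∈ Set.Ici S) P)).symm

theorem Submodule.card_le_and_finrank_eq (B : Submodule R M) (s : ℕ) :
    Nat.card {S : Submodule R M // S ≤ B ∧ finrank R S = s} =
      Nat.card {S : Submodule R B // finrank R S = s} :=
  Nat.card_congr (((Submodule.MapSubtype.orderIso B).toEquiv.subtypeEquiv
    (p := fun S : Submodule R B => finrank R S = s) (q := fun S => finrank R S.1 = s) fun S => by
      change _ ↔ finrank R (S.map B.subtype) = s
      rw [Submodule.finrank_map_subtype_eq]).trans
    (Equiv.subtypeSubtypeEquivSubtypeInter (· ≤ B) fun S => finrank R S = s)).symm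

theorem LinearEquiv.card_finrank_eq (e : M ≃ₗ[R] M') (d : ℕ) :
    Nat.card {X : Submodule R M // finrank R X = d} =
      Nat.card {X : Submodule R M' // finrank R X = d} :=
  Nat.card_congr ((Submodule.orderIsoMapComap e).toEquiv.subtypeEquiv fun X => by
    change _ ↔ finrank R (X.map (e : M →ₗ[R] M')) = d
    rw [e.finrank_map_eq])

end Ring

section Field

variable {K V : Type*} [Field K] [AddCommGroup V] [Module K V] [FiniteDimensional K V]

theorem Submodule.finrank_map_mkQ_add_finrank_inf (S X : Submodule K V) :
    finrank K (X.map S.mkQ) + finrank K ↥(X ⊓ S) = finrank K X := by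
  have hr := LinearMap.finrank_range_add_finrank_ker (S.mkQ.comp X.subtype)
  rw [LinearMap.range_comp, Submodule.range_subtype, LinearMap.ker_comp, Submodule.ker_mkQ] at hr
  have hinf : (X ⊓ S).comap X.subtype = S.comap X.subtype := by
    ext x
    simp
  rw [← hr, ← (Submodule.comapSubtypeEquivOfLe (inf_le_left : X ⊓ S ≤ X)).finrank_eq, hinf]

theorem Submodule.finrank_comap_mkQ (S : Submodule K V) (Y : Submodule K (V ⧸ S)) :
    finrank K (Y.comap S.mkQ) = finrank K Y + finrank K S := by
  rw [← S.finrank_map_mkQ_add_finrank_inf (Y.comap S.mkQ),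
    Submodule.map_comap_eq_of_surjective S.mkQ_surjective, inf_eq_right.2 (S.le_comap_mkQ Y)]

theorem Submodule.finrank_comap_mkQ_inf (S B : Submodule K V) (Y : Submodule K (V ⧸ S)) :
    finrank K ↥(Y.comap S.mkQ ⊓ B) = finrank K ↥(Y ⊓ B.map S.mkQ) + finrank K ↥(B ⊓ S) := by
  have hmap : (Y.comap S.mkQ ⊓ B).map S.mkQ = Y ⊓ B.map S.mkQ := by
    ext y
    simp only [Submodule.mem_map, Submodule.mem_inf, Submodule.mem_comap]
    grind
  rw [← S.finrank_map_mkQ_add_finrank_inf (Y.comap S.mkQ ⊓ B), hmap, inf_right_comm,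
    inf_eq_right.2 (S.le_comap_mkQ Y), inf_comm S B]

end Field

section FiniteField

variable {F : Type*} [Field F] [Fintype F]
variable {W : Type*} [AddCommGroup W] [Module F W] [FiniteDimensional F W]

local notation "q" => Fintype.card F

theorem Submodule.card_subtype_comp_mkQ {ι : Type*} [Fintype ι] (C : Submodule F W)
    (P : (ι → W ⧸ C) → Prop) :
    Nat.card {t : ι → W // P (C.mkQ ∘ t)} =
      Nat.card {u // P u} * q ^ (finrank F C * Fintype.card ι) := by
  have : Finite W := Module.finite_of_finite F
  have : Finite (W ⧸ C) := Module.finite_of_finite F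
  refine Nat.card_subtype_eq_mul_of_card_fiber (C.mkQ ∘ ·) (fun _ h => h) fun u hu => ?_
  let e : {t : ι → W // P (C.mkQ ∘ t) ∧ C.mkQ ∘ t = u} ≃ ∀ i, {x : W // C.mkQ x = u i} :=
    (Equiv.subtypeEquivRight fun t => by
      rw [and_iff_right_of_imp fun h => h ▸ hu, funext_iff]; rfl).trans
    Equiv.subtypePiEquivPi
  rw [Nat.card_congr e, Nat.card_pi, Finset.prod_congr rfl fun i _ => C.card_mkQ_fiber (u i),
    Finset.prod_const, Finset.card_univ, Module.natCard_eq_pow_finrank (K := F),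
    Nat.card_eq_fintype_card, pow_mul]

theorem Submodule.card_linearIndependent_span_eq {d : ℕ} (X : Submodule F W)
    (hX : finrank F X = d) :
    Nat.card {t : Fin d → W // LinearIndependent F t ∧ Submodule.span F (Set.range t) = X} =
      Nat.card (GL (Fin d) F) := by
  have : Finite X := Module.finite_of_finite F
  let e : {t : Fin d → W // LinearIndependent F t ∧ Submodule.span F (Set.range t) = X} ≃
      {t : Fin d → X // LinearIndependent F t} :=
    { toFun t := ⟨fun i => ⟨t.1 i, t.2.2.le (Submodule.subset_span (Set.mem_range_self i))⟩,
        LinearIndependent.of_comp X.subtype t.2.1⟩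
      invFun t := ⟨X.subtype ∘ t.1, t.2.map' X.subtype X.ker_subtype, by
        rw [Set.range_comp, ← Submodule.map_span,
          t.2.span_eq_top_of_card_eq_finrank' (by simp [hX]), Submodule.map_top,
          Submodule.range_subtype]⟩
      left_inv _ := rfl
      right_inv _ := rfl }
  rw [Nat.card_congr e, card_linearIndependent hX.ge, Matrix.card_GL_field, hX]

theorem card_finrank_eq_mul_card_GL (d : ℕ) :
    Nat.card {X : Submodule F W // finrank F X = d} * Nat.card (GL (Fin d) F) =
      Nat.card {t : Fin d → W // LinearIndependent F t} := by
  have : Finite W := Module.finite_of_finite F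
  refine (Nat.card_subtype_eq_mul_of_card_fiber (fun t => Submodule.span F (Set.range t))
    (fun t ht => ?_) fun X hX => X.card_linearIndependent_span_eq hX).symm
  rw [finrank_span_eq_card ht, Fintype.card_fin]

theorem card_finrank_eq_gaussBinomZ (d : ℕ) :
    (Nat.card {X : Submodule F W // finrank F X = d} : ℚ) = gaussBinomZ q (finrank F W) d := by
  by_cases hd : d ≤ finrank F W
  · have : Finite W := Module.finite_of_finite F
    have hq : 1 < q := Fintype.one_lt_card
    have cast_prod : ∀ m, d ≤ m → ((∏ i : Fin d, (q ^ m - q ^ (i : ℕ)) : ℕ) : ℚ) =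
        ∏ i ∈ Finset.range d, ((q : ℚ) ^ m - q ^ i) := fun m hm => by
      rw [Nat.cast_prod, Fin.prod_univ_eq_prod_range (fun i => ((q ^ m - q ^ i : ℕ) : ℚ))]
      refine Finset.prod_congr rfl fun i hi => ?_
      rw [Nat.cast_sub (Nat.pow_le_pow_right hq.le (by grind)), Nat.cast_pow, Nat.cast_pow]
    have hGL : (Nat.card (GL (Fin d) F) : ℚ) ≠ 0 := Nat.cast_ne_zero.2 Nat.card_pos.ne'
    have h := congrArg (Nat.cast (R := ℚ)) (card_finrank_eq_mul_card_GL (F := F) (W := W) d)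
    rw [Nat.cast_mul, eq_comm, ← div_eq_iff hGL, card_linearIndependent hd, Matrix.card_GL_field,
      cast_prod _ hd, cast_prod _ le_rfl] at h
    rw [← h, gaussBinomZ_eq_prod_div (by omega) hd]
  · have : IsEmpty {X : Submodule F W // finrank F X = d} :=
      ⟨fun X => hd (X.2 ▸ Submodule.finrank_le X.1)⟩
    rw [Nat.card_of_isEmpty, Nat.cast_zero, gaussBinomZ, if_neg (by omega)]

/-- Count the `d`-tuples whose image in `W ⧸ C` is linearly independent in two ways: through the
subspace they span, which is disjoint from `C` and spanned by `|GL_d(F)|` of them, and through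
their image in `W ⧸ C`, each fiber being a coset of `C^d`. -/
theorem Submodule.card_finrank_eq_and_disjoint (C : Submodule F W) (d : ℕ) :
    Nat.card {Y : Submodule F W // finrank F Y = d ∧ Disjoint Y C} =
      q ^ (finrank F C * d) * Nat.card {Z : Submodule F (W ⧸ C) // finrank F Z = d} := by
  have : Finite W := Module.finite_of_finite F
  have by_span : Nat.card {t : Fin d → W // LinearIndependent F (C.mkQ ∘ t)} =
      Nat.card {Y : Submodule F W // finrank F Y = d ∧ Disjoint Y C} *
        Nat.card (GL (Fin d) F) := by
    refine Nat.card_subtype_eq_mul_of_card_fiber (fun t => Submodule.span F (Set.range t))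
      (fun t ht => ⟨by rw [finrank_span_eq_card (ht.of_comp _), Fintype.card_fin],
        by simpa using Submodule.range_ker_disjoint ht⟩) fun Y hY => ?_
    rw [← Submodule.card_linearIndependent_span_eq Y hY.1]
    refine Nat.card_congr (Equiv.subtypeEquivRight fun t =>
      ⟨fun h => ⟨h.1.of_comp _, h.2⟩, fun h => ⟨h.1.map ?_, h.2⟩⟩)
    rw [Submodule.ker_mkQ, h.2]
    exact hY.2
  have by_quotient := C.card_subtype_comp_mkQ (ι := Fin d) fun u => LinearIndependent F u
  rw [by_span, ← card_finrank_eq_mul_card_GL, Fintype.card_fin] at by_quotient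
  refine Nat.eq_of_mul_eq_mul_right (Nat.card_pos (α := GL (Fin d) F)) ?_
  rw [by_quotient]
  ring

theorem Submodule.card_finrank_eq_and_inf_eq (B S : Submodule F W) (hSB : S ≤ B) (d : ℕ) :
    Nat.card {X : Submodule F W // finrank F X = finrank F S + d ∧ X ⊓ B = S} =
      q ^ ((finrank F B - finrank F S) * d) *
        Nat.card {Z : Submodule F (W ⧸ B) // finrank F Z = d} := by
  have hS_le : ∀ X : Submodule F W, finrank F X = finrank F S + d ∧ X ⊓ B = S ↔
      S ≤ X ∧ finrank F X = finrank F S + d ∧ X ⊓ B = S :=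
    fun X => ⟨fun h => ⟨h.2 ▸ inf_le_left, h⟩, And.right⟩
  have hquot : ∀ Y : Submodule F (W ⧸ S),
      finrank F (Y.comap S.mkQ) = finrank F S + d ∧ Y.comap S.mkQ ⊓ B = S ↔
        finrank F Y = d ∧ Disjoint Y (B.map S.mkQ) := by
    intro Y
    have hS : S ≤ Y.comap S.mkQ ⊓ B := le_inf (S.le_comap_mkQ Y) hSB
    have hrank := S.finrank_comap_mkQ_inf B Y
    rw [inf_eq_right.2 hSB] at hrank
    rw [S.finrank_comap_mkQ, disjoint_iff, ← Submodule.finrank_eq_zero]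
    refine and_congr (by omega) ⟨fun h => ?_, fun h => ?_⟩
    · rw [h] at hrank
      omega
    · exact (Submodule.eq_of_le_of_finrank_eq hS (by omega)).symm
  have hB : finrank F (B.map S.mkQ) = finrank F B - finrank F S := by
    have := S.finrank_map_mkQ_add_finrank_inf B
    rw [inf_eq_right.2 hSB] at this
    omega
  rw [Nat.card_congr (Equiv.subtypeEquivRight hS_le), S.card_ge_and_eq_card_quotient,
    Nat.card_congr (Equiv.subtypeEquivRight hquot), Submodule.card_finrank_eq_and_disjoint, hB,
    (Submodule.quotientQuotientEquivQuotient S B hSB).card_finrank_eq]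

theorem Submodule.card_finrank_eq_and_finrank_inf_eq (B : Submodule F W) (m s : ℕ) :
    (Nat.card {X : Submodule F W // finrank F X = m ∧ finrank F ↥(X ⊓ B) = s} : ℚ) =
      (q : ℚ) ^ (((finrank F B : ℤ) - s) * ((m : ℤ) - s)) * gaussBinomZ q (finrank F B) s *
        gaussBinomZ q ((finrank F W : ℤ) - finrank F B) ((m : ℤ) - s) := by
  by_cases hs : s ≤ m ∧ s ≤ finrank F B
  · obtain ⟨d, rfl⟩ : ∃ d, m = s + d := ⟨m - s, by omega⟩
    have : Finite W := Module.finite_of_finite F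
    have by_inf : Nat.card {X : Submodule F W // finrank F X = s + d ∧ finrank F ↥(X ⊓ B) = s} =
        Nat.card {S : Submodule F W // S ≤ B ∧ finrank F S = s} *
          (q ^ ((finrank F B - s) * d) * Nat.card {Z : Submodule F (W ⧸ B) // finrank F Z = d}) := by
      refine Nat.card_subtype_eq_mul_of_card_fiber (· ⊓ B) (fun X hX => ⟨inf_le_right, hX.2⟩)
        fun S ⟨hSB, hS⟩ => ?_
      subst hS
      rw [← B.card_finrank_eq_and_inf_eq S hSB d]
      exact Nat.card_congr (Equiv.subtypeEquivRight fun X =>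
        ⟨fun h => ⟨h.1.1, h.2⟩, fun h => ⟨⟨h.1, by rw [h.2]⟩, h.2⟩⟩)
    have hexp : ((finrank F B : ℤ) - s) * (((s + d : ℕ) : ℤ) - s) =
        ((finrank F B - s) * d : ℕ) := by
      push_cast [Nat.cast_sub hs.2]
      ring
    rw [by_inf, B.card_le_and_finrank_eq, hexp, zpow_natCast, Nat.cast_mul, Nat.cast_mul,
      card_finrank_eq_gaussBinomZ, card_finrank_eq_gaussBinomZ, Submodule.finrank_quotient,
      Nat.cast_sub (Submodule.finrank_le B)]
    push_cast
    ring_nf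
  · have : IsEmpty {X : Submodule F W // finrank F X = m ∧ finrank F ↥(X ⊓ B) = s} :=
      ⟨fun ⟨X, hX, hXB⟩ => hs ⟨hXB ▸ hX ▸ Submodule.finrank_mono inf_le_left,
        hXB ▸ Submodule.finrank_mono inf_le_right⟩⟩
    have hzero : gaussBinomZ q (finrank F B) s = 0 ∨
        gaussBinomZ q ((finrank F W : ℤ) - finrank F B) ((m : ℤ) - s) = 0 := by
      by_cases hsB : s ≤ finrank F B
      · exact Or.inr (if_neg (by omega))
      · exact Or.inl (if_neg (by omega))
    rw [Nat.card_of_isEmpty, Nat.cast_zero]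
    rcases hzero with h | h <;> simp [h]

end FiniteField

theorem count_subspaces_prescribed_intersection_general
    (F : Type) [Field F] [Fintype F] (q t k n l j : ℕ)
    (hq : q = Fintype.card F) (htk : t ≤ k)
    (V₁ V₂ : Submodule F (Fin n → F))
    (hV₁ : finrank F V₁ = t) (hV₂ : finrank F V₂ = t)
    (hl : finrank F ↥(V₁ ⊓ V₂) = l)
    (hlj : l ≤ j) :
    (Nat.card {U : Submodule F (Fin n → F) //
        V₁ ≤ U ∧ finrank F U = k ∧ finrank F ↥(U ⊓ V₂) = j} : ℚ) =
      (q : ℚ) ^ (((k : ℤ) - t - j + l) * ((t : ℤ) - j)) *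
        gaussBinomZ q ((t : ℤ) - l) ((j : ℤ) - l) *
        gaussBinomZ q ((n : ℤ) - 2 * t + l) ((k : ℤ) - t - j + l) := by
  subst hq
  have hlt : l ≤ t := hl ▸ hV₂ ▸ Submodule.finrank_mono inf_le_right
  have htn : t ≤ n := hV₁ ▸ (Submodule.finrank_le V₁).trans_eq (finrank_fin_fun F)
  have hB : finrank F (V₂.map V₁.mkQ) = t - l := by
    have := V₁.finrank_map_mkQ_add_finrank_inf V₂
    rw [inf_comm, hl, hV₂] at this
    omega
  have hquot : finrank F ((Fin n → F) ⧸ V₁) = n - t := by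
    rw [Submodule.finrank_quotient, hV₁, finrank_fin_fun]
  have in_quotient : Nat.card {U : Submodule F (Fin n → F) //
        V₁ ≤ U ∧ finrank F U = k ∧ finrank F ↥(U ⊓ V₂) = j} =
      Nat.card {Y : Submodule F ((Fin n → F) ⧸ V₁) //
        finrank F Y = k - t ∧ finrank F ↥(Y ⊓ V₂.map V₁.mkQ) = j - l} := by
    rw [V₁.card_ge_and_eq_card_quotient]
    refine Nat.card_congr (Equiv.subtypeEquivRight fun Y => ?_)
    rw [V₁.finrank_comap_mkQ, V₁.finrank_comap_mkQ_inf, inf_comm V₂, hl, hV₁]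
    omega
  rw [in_quotient, Submodule.card_finrank_eq_and_finrank_inf_eq, hB, hquot]
  push_cast [Nat.cast_sub htk, Nat.cast_sub hlj, Nat.cast_sub hlt, Nat.cast_sub htn]
  ring_nf

/-- Let `q` be a prime power (realized as the cardinality of a finite
field `F`), let `1 ≤ t ≤ k ≤ n`, and let `V₁, V₂` be two distinct `t`-dimensional
subspaces of `F_q^n` with `dim(V₁ ∩ V₂) = l`, where `0 ≤ l ≤ t−1`.  Then for every
`j` with `l ≤ j ≤ t`, the number of `k`-dimensional subspaces `U` of `F_q^n` with
`V₁ ⊆ U` and `dim(U ∩ V₂) = j` equals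
`q^{(k−t−j+l)(t−j)} · [t−l choose j−l]_q · [n−2t+l choose k−t−j+l]_q`. -/
theorem count_subspaces_prescribed_intersection
    (F : Type) [Field F] [Fintype F] (q t k n l j : ℕ)
    (hq : q = Fintype.card F) (ht : 1 ≤ t) (htk : t ≤ k) (hkn : k ≤ n)
    (V₁ V₂ : Submodule F (Fin n → F)) (hne : V₁ ≠ V₂)
    (hV₁ : finrank F V₁ = t) (hV₂ : finrank F V₂ = t)
    (hl : finrank F ↥(V₁ ⊓ V₂) = l) (hlt : l ≤ t - 1)
    (hlj : l ≤ j) (hjt : j ≤ t) :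
    (Nat.card {U : Submodule F (Fin n → F) //
        V₁ ≤ U ∧ finrank F U = k ∧ finrank F ↥(U ⊓ V₂) = j} : ℚ) =
      (q : ℚ) ^ (((k : ℤ) - t - j + l) * ((t : ℤ) - j)) *
        gaussBinomZ q ((t : ℤ) - l) ((j : ℤ) - l) *
        gaussBinomZ q ((n : ℤ) - 2 * t + l) ((k : ℤ) - t - j + l) :=
  count_subspaces_prescribed_intersection_general F q t k n l j hq htk V₁ V₂ hV₁ hV₂ hl hlj
end

section
/- Fix a prime power q and integers 1 ≤ t ≤ k, and let d_{l,j} be as in the context. Then ∏_{l=0}^{t} max_{l ≤ j ≤ t} d_{l,j} ≤ 2^{k(t+1)+1} · q^{(k−t)t(t+1)}. -/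
/-- The Gaussian (q-)binomial coefficient `[a choose b]_q`, defined (in `ℚ`) by the
product formula `∏_{i=0}^{b-1} (q^{a-i} − 1)/(q^{b-i} − 1)`.  (With truncated natural
subtraction in the exponents, this automatically evaluates to `0` when `b > a`.) -/
def gaussBinom (q a b : ℕ) : ℚ :=
  ∏ i ∈ Finset.range b, (((q : ℚ) ^ (a - i) - 1) / ((q : ℚ) ^ (b - i) - 1))

/-- The entry `d_{l,j} = [t−l choose t−j]_q · [k−t+l choose j]_q · q^{(k−t−j+l)(t−j)}`
(for `l ≤ j`; all subtractions are truncated, which is harmless since whenever the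
truncation matters one of the Gaussian binomial factors vanishes). -/
def dEnt (q k t l j : ℕ) : ℚ :=
  gaussBinom q (t - l) (t - j) * gaussBinom q (k - t + l) j *
    (q : ℚ) ^ ((k + l - t - j) * (t - j))

lemma gaussBinom_factor_nonneg (q a b i : ℕ) (hq : 2 ≤ q) :
    0 ≤ ((q : ℚ) ^ (a - i) - 1) / ((q : ℚ) ^ (b - i) - 1) := by
  have hq1 : (1 : ℚ) ≤ (q : ℚ) := by exact_mod_cast Nat.one_le_of_lt hq
  have hnum : (1 : ℚ) ≤ (q : ℚ) ^ (a - i) := one_le_pow₀ hq1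
  have hden : (1 : ℚ) ≤ (q : ℚ) ^ (b - i) := one_le_pow₀ hq1
  rcases eq_or_lt_of_le hden with h | h
  · rw [← h]; simp
  · exact div_nonneg (by linarith) (by linarith)

lemma gaussBinom_nonneg (q a b : ℕ) (hq : 2 ≤ q) : 0 ≤ gaussBinom q a b :=
  Finset.prod_nonneg fun i _ => gaussBinom_factor_nonneg q a b i hq

lemma gaussBinom_eq_zero (q a b : ℕ) (h : a < b) : gaussBinom q a b = 0 := by
  apply Finset.prod_eq_zero (Finset.mem_range.mpr h)
  simp [Nat.sub_self]

lemma gaussBinom_le (q a b : ℕ) (hq : 2 ≤ q) (hba : b ≤ a) :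
    gaussBinom q a b ≤ 2 ^ b * (q : ℚ) ^ (b * (a - b)) := by
  have hq1 : (1 : ℚ) ≤ (q : ℚ) := by exact_mod_cast Nat.one_le_of_lt hq
  have hq2 : (2 : ℚ) ≤ (q : ℚ) := by exact_mod_cast hq
  have key : gaussBinom q a b ≤ ∏ _i ∈ Finset.range b, (2 * (q : ℚ) ^ (a - b)) := by
    apply Finset.prod_le_prod
    · exact fun i _ => gaussBinom_factor_nonneg q a b i hq
    · intro i hi
      rw [Finset.mem_range] at hi
      have hbi : 1 ≤ b - i := by omega
      have hd2 : (2 : ℚ) ≤ (q : ℚ) ^ (b - i) :=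
        le_trans hq2 (le_self_pow₀ hq1 (by omega))
      have hdpos : (0 : ℚ) < (q : ℚ) ^ (b - i) - 1 := by linarith
      rw [div_le_iff₀ hdpos]
      have hkey : (q : ℚ) ^ (a - b) * (q : ℚ) ^ (b - i) = (q : ℚ) ^ (a - i) := by
        rw [← pow_add]; congr 1; omega
      have hab2 : 2 * (q : ℚ) ^ (a - b) ≤ (q : ℚ) ^ (a - i) := by
        nlinarith [pow_nonneg (by linarith : (0:ℚ) ≤ (q:ℚ)) (a - b)]
      nlinarith [pow_nonneg (by linarith : (0:ℚ) ≤ (q:ℚ)) (a - b)]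
  calc gaussBinom q a b ≤ ∏ _i ∈ Finset.range b, (2 * (q : ℚ) ^ (a - b)) := key
    _ = (2 * (q : ℚ) ^ (a - b)) ^ b := by rw [Finset.prod_const, Finset.card_range]
    _ = 2 ^ b * (q : ℚ) ^ (b * (a - b)) := by rw [mul_pow, ← pow_mul, mul_comm (a-b) b]

lemma dEnt_nonneg (q k t l j : ℕ) (hq : 2 ≤ q) : 0 ≤ dEnt q k t l j := by
  unfold dEnt
  have hqnn : (0 : ℚ) ≤ (q : ℚ) := by positivity
  exact mul_nonneg (mul_nonneg (gaussBinom_nonneg _ _ _ hq) (gaussBinom_nonneg _ _ _ hq))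
    (pow_nonneg hqnn _)

lemma dEnt_le (q k t l j : ℕ) (hq : 2 ≤ q) (hlj : l ≤ j) (hjt : j ≤ t) (htk : t ≤ k) :
    dEnt q k t l j ≤ 2 ^ t * (q : ℚ) ^ ((k - t) * t) := by
  have hq1 : (1 : ℚ) ≤ (q : ℚ) := by exact_mod_cast Nat.one_le_of_lt hq
  have hRnn : (0 : ℚ) ≤ 2 ^ t * (q : ℚ) ^ ((k - t) * t) := by positivity
  by_cases hcase : k - t + l < j
  · unfold dEnt
    rw [gaussBinom_eq_zero q _ _ hcase]
    simpa using hRnn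
  · push_neg at hcase
    unfold dEnt
    have h1 : gaussBinom q (t - l) (t - j) ≤
        2 ^ (t - j) * (q : ℚ) ^ ((t - j) * ((t - l) - (t - j))) :=
      gaussBinom_le q _ _ hq (by omega)
    have h2 : gaussBinom q (k - t + l) j ≤
        2 ^ j * (q : ℚ) ^ (j * ((k - t + l) - j)) :=
      gaussBinom_le q _ _ hq hcase
    have hnn1 := gaussBinom_nonneg q (t - l) (t - j) hq
    have hnn2 := gaussBinom_nonneg q (k - t + l) j hq
    have hb1 : (0 : ℚ) ≤ 2 ^ (t - j) * (q : ℚ) ^ ((t - j) * ((t - l) - (t - j))) := by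
      positivity
    have hb2 : (0 : ℚ) ≤ 2 ^ j * (q : ℚ) ^ (j * ((k - t + l) - j)) := by positivity
    have hqp : (0 : ℚ) ≤ (q : ℚ) ^ ((k + l - t - j) * (t - j)) := by positivity
    calc gaussBinom q (t - l) (t - j) * gaussBinom q (k - t + l) j *
          (q : ℚ) ^ ((k + l - t - j) * (t - j))
        ≤ (2 ^ (t - j) * (q : ℚ) ^ ((t - j) * ((t - l) - (t - j)))) *
          (2 ^ j * (q : ℚ) ^ (j * ((k - t + l) - j))) *
          (q : ℚ) ^ ((k + l - t - j) * (t - j)) := by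
          apply mul_le_mul_of_nonneg_right _ hqp
          exact mul_le_mul h1 h2 hnn2 hb1
      _ = 2 ^ ((t - j) + j) *
          (q : ℚ) ^ ((t - j) * ((t - l) - (t - j)) + j * ((k - t + l) - j)
            + (k + l - t - j) * (t - j)) := by
          rw [pow_add, pow_add, pow_add]; ring
      _ ≤ 2 ^ t * (q : ℚ) ^ ((k - t) * t) := by
          have he1 : (t - j) + j = t := by omega
          rw [he1]
          apply mul_le_mul_of_nonneg_left _ (by positivity : (0:ℚ) ≤ (2:ℚ) ^ t)
          apply pow_le_pow_right₀ hq1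
          -- exponent inequality in ℕ
          obtain ⟨a, ha⟩ : ∃ a, j = l + a := ⟨j - l, by omega⟩
          obtain ⟨b, hb⟩ : ∃ b, t = j + b := ⟨t - j, by omega⟩
          obtain ⟨c, hc⟩ : ∃ c, k - t + l = j + c := ⟨k - t + l - j, by omega⟩
          have hk : k = l + 2 * a + b + c := by omega
          subst ha hb hk
          have e1 : (l + a + b - (l + a)) = b := by omega
          have e2 : l + a + b - l - b = a := by omega
          have e3 : ((l + 2*a + b + c) - (l + a + b) + l) - (l + a) = c := by omega
          have e4 : ((l + 2*a + b + c) + l - (l + a + b) - (l + a)) = c := by omega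
          have e5 : (l + 2*a + b + c) - (l + a + b) = a + c := by omega
          rw [e1, e2, e3, e4, e5]
          nlinarith [Nat.zero_le a, Nat.zero_le l]

/-- For a prime power `q` and `1 ≤ t ≤ k`,
`∏_{l=0}^{t} max_{l ≤ j ≤ t} d_{l,j} ≤ 2^{k(t+1)+1} · q^{(k−t)t(t+1)}`. -/
theorem prod_row_max_bound (q t k : ℕ) (hq : IsPrimePow q) (ht : 1 ≤ t) (htk : t ≤ k) :
    (∏ l : Fin (t + 1),
        (Finset.Icc (l : ℕ) t).sup'
          (Finset.nonempty_Icc.mpr (Nat.lt_succ_iff.mp l.isLt))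
          (fun j => dEnt q k t l j)) ≤
      (2 : ℚ) ^ (k * (t + 1) + 1) * (q : ℚ) ^ ((k - t) * t * (t + 1)) := by
  have hq2 : 2 ≤ q := hq.two_le
  have hq1 : (1 : ℚ) ≤ (q : ℚ) := by exact_mod_cast Nat.one_le_of_lt hq2
  set B : ℚ := 2 ^ t * (q : ℚ) ^ ((k - t) * t) with hB
  have hstep : (∏ l : Fin (t + 1),
        (Finset.Icc (l : ℕ) t).sup'
          (Finset.nonempty_Icc.mpr (Nat.lt_succ_iff.mp l.isLt))
          (fun j => dEnt q k t l j)) ≤ ∏ _l : Fin (t + 1), B := by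
    apply Finset.prod_le_prod
    · intro l _
      have hll : (l : ℕ) ∈ Finset.Icc (l : ℕ) t :=
        Finset.mem_Icc.mpr ⟨le_refl _, Nat.lt_succ_iff.mp l.isLt⟩
      exact le_trans (dEnt_nonneg q k t l l hq2)
        (Finset.le_sup' (fun j => dEnt q k t l j) hll)
    · intro l _
      apply Finset.sup'_le
      intro j hj
      rw [Finset.mem_Icc] at hj
      exact dEnt_le q k t l j hq2 hj.1 hj.2 htk
  have hBval : (∏ _l : Fin (t + 1), B) = 2 ^ (t * (t + 1)) * (q : ℚ) ^ ((k - t) * t * (t + 1)) := by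
    rw [Finset.prod_const, Finset.card_univ, Fintype.card_fin, hB, mul_pow, ← pow_mul, ← pow_mul]
  refine le_trans hstep ?_
  rw [hBval]
  apply mul_le_mul_of_nonneg_right _ (by positivity)
  apply pow_le_pow_right₀ (by norm_num)
  calc t * (t + 1) ≤ k * (t + 1) := Nat.mul_le_mul_right _ htk
    _ ≤ k * (t + 1) + 1 := Nat.le_succ _
end

section
/- Fix a prime power q, integers 1 ≤ t ≤ k, and j ∈ {0,…,t}, and let D_j be as in the context. Then the number of permutations π of {0, 1, …, t} such that the entry of D_j in row i and column π(i) is nonzero for every i ∈ {0,…,t} is at most 2^t. -/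
/-- The upper-triangular `(t+1) × (t+1)` matrix `D` with entries `d_{l,j}` for `l ≤ j`
and `0` for `l > j`. -/
def Dmat (q k t : ℕ) : Matrix (Fin (t + 1)) (Fin (t + 1)) ℚ :=
  fun l j => if (l : ℕ) ≤ (j : ℕ) then dEnt q k t l j else 0

/-- The matrix `D_j`, obtained from `D` by replacing its `j`-th column with the column
vector `(0, 0, …, 0, 1)ᵀ`. -/
def DmatJ (q k t : ℕ) (j : Fin (t + 1)) : Matrix (Fin (t + 1)) (Fin (t + 1)) ℚ :=
  (Dmat q k t).updateCol j (fun l => if l = Fin.last t then 1 else 0)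

/-! A permutation `π` whose diagonal entries `(D_j)_{i, π i}` are all nonzero sends the last
index to `j` and every other index `i` to some `π i ≥ i`, because `D` is upper triangular and
the `j`-th column of `D_j` is the last unit vector. Such a permutation is determined by its fixed
points among `0, …, t-1`: the only index that can enter the upper set `{z > y}` from outside is
`i` itself, so every `y` strictly between `i` and `π i` is fixed, i.e. `π i` is the first
non-fixed index after `i`. -/

namespace Equiv.Perm

variable {α : Type*} [DecidableEq α]

/-- `π` would map the `#W + 1` points `W \ {a} ∪ {u, v}` injectively into `W`. -/
theorem eq_of_notMem_of_apply_mem (π : Perm α) {W : Finset α} {a : α}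
    (hW : ∀ z ∈ W, z ≠ a → π z ∈ W) {u v : α} (hu : u ∉ W) (hv : v ∉ W)
    (hπu : π u ∈ W) (hπv : π v ∈ W) : u = v := by
  by_contra huv
  have hmaps : ∀ z ∈ insert u (insert v (W.erase a)), π z ∈ W := by
    simp only [Finset.mem_insert, Finset.mem_erase]
    rintro z (rfl | rfl | ⟨hza, hzW⟩)
    exacts [hπu, hπv, hW z hzW hza]
  have hle := Finset.card_le_card_of_injOn π hmaps π.injective.injOn
  have herase := Finset.pred_card_le_card_erase (s := W) (a := a)
  rw [Finset.card_insert_of_notMem (by simp [huv, hu]),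
    Finset.card_insert_of_notMem (by simp [hv])] at hle
  omega

end Equiv.Perm

section LastAndAbove

variable {n : ℕ} {π : Equiv.Perm (Fin (n + 1))}

theorem apply_eq_self_of_lt_of_lt_apply (hπ : ∀ x, x ≠ Fin.last n → x ≤ π x)
    {x y : Fin (n + 1)} (hxy : x < y) (hyπx : y < π x) : π y = y := by
  by_contra hy
  have hW : ∀ z ∈ Finset.Ioi y, z ≠ Fin.last n → π z ∈ Finset.Ioi y := fun z hz hzl =>
    Finset.mem_Ioi.2 ((Finset.mem_Ioi.1 hz).trans_le (hπ z hzl))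
  have hπy : y < π y := (hπ y (hyπx.trans_le (Fin.le_last _)).ne).lt_of_ne' hy
  exact hxy.ne (π.eq_of_notMem_of_apply_mem hW (by simp [hxy.le]) (by simp)
    (Finset.mem_Ioi.2 hyπx) (Finset.mem_Ioi.2 hπy))

theorem not_apply_lt_apply {π' : Equiv.Perm (Fin (n + 1))}
    (hπ : ∀ x, x ≠ Fin.last n → x ≤ π x) (hπ' : ∀ x, x ≠ Fin.last n → x ≤ π' x)
    (hfix : ∀ x, π x = x ↔ π' x = x) {x : Fin (n + 1)} (hx : x ≠ Fin.last n)
    (hπx : π x ≠ x) : ¬ π x < π' x := by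
  intro hlt
  have hπ'πx : π' (π x) = π x :=
    apply_eq_self_of_lt_of_lt_apply hπ' ((hπ x hx).lt_of_ne' hπx) hlt
  exact hπx (π.injective ((hfix _).2 hπ'πx))

theorem eq_of_apply_last_eq_of_apply_eq_self_iff {π' : Equiv.Perm (Fin (n + 1))}
    (hπ : ∀ x, x ≠ Fin.last n → x ≤ π x) (hπ' : ∀ x, x ≠ Fin.last n → x ≤ π' x)
    (hlast : π (Fin.last n) = π' (Fin.last n))
    (hfix : ∀ x, x ≠ Fin.last n → (π x = x ↔ π' x = x)) : π = π' := by
  have hfix_all : ∀ x, π x = x ↔ π' x = x := by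
    intro x
    rcases eq_or_ne x (Fin.last n) with rfl | hx
    · rw [hlast]
    · exact hfix x hx
  ext1 x
  rcases eq_or_ne x (Fin.last n) with rfl | hx
  · exact hlast
  by_cases hπx : π x = x
  · rw [hπx, (hfix_all x).1 hπx]
  have hπ'x : π' x ≠ x := fun h => hπx ((hfix_all x).2 h)
  exact le_antisymm (not_lt.1 (not_apply_lt_apply hπ' hπ (fun y => (hfix_all y).symm) hx hπ'x))
    (not_lt.1 (not_apply_lt_apply hπ hπ' hfix_all hx hπx))

end LastAndAbove

section DmatJ

variable {q k t : ℕ} {j : Fin (t + 1)}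

theorem DmatJ_apply_col_eq_zero {l : Fin (t + 1)} (hl : l ≠ Fin.last t) :
    DmatJ q k t j l j = 0 := by
  simp [DmatJ, hl]

theorem DmatJ_eq_zero_of_lt {l m : Fin (t + 1)} (hm : m ≠ j) (hml : m < l) :
    DmatJ q k t j l m = 0 := by
  simp [DmatJ, Dmat, Matrix.updateCol_ne hm, not_le.2 hml]

theorem apply_last_eq_and_le_apply_of_DmatJ_ne_zero {π : Equiv.Perm (Fin (t + 1))}
    (hπ : ∀ i, DmatJ q k t j i (π i) ≠ 0) :
    π (Fin.last t) = j ∧ ∀ x, x ≠ Fin.last t → x ≤ π x := by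
  have hlast : π (Fin.last t) = j := by
    by_contra h
    have hj : π.symm j ≠ Fin.last t := fun h' => h (by rw [← h', π.apply_symm_apply])
    exact hπ (π.symm j) (by rw [π.apply_symm_apply]; exact DmatJ_apply_col_eq_zero hj)
  refine ⟨hlast, fun x hx => not_lt.1 fun hlt => hπ x (DmatJ_eq_zero_of_lt ?_ hlt)⟩
  rw [← hlast]
  exact π.injective.ne hx

end DmatJ

theorem card_nonzero_generalized_diagonals_general (q t k : ℕ) (j : Fin (t + 1)) :
    Nat.card {π : Equiv.Perm (Fin (t + 1)) // ∀ i, DmatJ q k t j i (π i) ≠ 0} ≤ 2 ^ t := by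
  let fixedPattern (π : {π : Equiv.Perm (Fin (t + 1)) // ∀ i, DmatJ q k t j i (π i) ≠ 0})
      (i : Fin t) : Bool := decide (π.1 i.castSucc = i.castSucc)
  have hinj : Function.Injective fixedPattern := by
    rintro ⟨π, hπ⟩ ⟨π', hπ'⟩ h
    obtain ⟨hlast, hle⟩ := apply_last_eq_and_le_apply_of_DmatJ_ne_zero hπ
    obtain ⟨hlast', hle'⟩ := apply_last_eq_and_le_apply_of_DmatJ_ne_zero hπ'
    refine Subtype.ext (eq_of_apply_last_eq_of_apply_eq_self_iff hle hle'
      (hlast.trans hlast'.symm) fun x hx => ?_)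
    obtain ⟨i, rfl⟩ := Fin.exists_castSucc_eq.2 hx
    simpa [fixedPattern] using congrFun h i
  calc Nat.card {π : Equiv.Perm (Fin (t + 1)) // ∀ i, DmatJ q k t j i (π i) ≠ 0}
      ≤ Nat.card (Fin t → Bool) := Nat.card_le_card_of_injective _ hinj
    _ = 2 ^ t := by simp

/-- For a prime power `q`, `1 ≤ t ≤ k` and `j ∈ {0,…,t}`, the matrix
`D_j` has at most `2^t` nonzero generalized diagonals: the number of permutations `π`
of `{0,…,t}` with `(D_j)_{i,π(i)} ≠ 0` for all `i` is at most `2^t`. -/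
theorem card_nonzero_generalized_diagonals (q t k : ℕ) (hq : IsPrimePow q)
    (ht : 1 ≤ t) (htk : t ≤ k) (j : Fin (t + 1)) :
    Nat.card {π : Equiv.Perm (Fin (t + 1)) // ∀ i, DmatJ q k t j i (π i) ≠ 0} ≤ 2 ^ t :=
  card_nonzero_generalized_diagonals_general q t k j
end
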